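/- arXiv:1912.01035 — 4 statements merged into one kernel-verified Lean document; each statement's English description precedes it below -/
import Mathlib

section
/- Let p ≥ 1, ℓ ≥ 0, b₀ ≥ 1, w₀ ≥ 0 be integers, s₀ = b₀ + w₀, and define the sequence (h_n) by h_0 = 1 and h_{n+1} = (s₀ + n + ℓ⌊n/p⌋)·h_n (h_n is the number of histories of the Young–Pólya urn of period p and parameter ℓ after n steps). Then for all integers m ≥ 0 and 0 ≤ i ≤ p−1: h_{pm+i} = (p+ℓ)^{pm} · (Γ(s₀+(p+ℓ)m+i)/Γ(s₀+(p+ℓ)m)) · ∏_{j=0}^{p−1} Γ(m + (s₀+j)/(p+ℓ))/Γ((s₀+j)/(p+ℓ)). -/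
open Real

/-- `histCount p ℓ s₀ n` is the number of histories after `n` steps of the Young–Pólya
urn of period `p` and parameter `ℓ` started with `s₀` balls:
`h_0 = 1` and `h_{n+1} = (s₀ + n + ℓ⌊n/p⌋) h_n`. -/
def histCount (p ℓ s₀ : ℕ) : ℕ → ℕ
  | 0 => 1
  | n + 1 => (s₀ + n + ℓ * (n / p)) * histCount p ℓ s₀ n

/-!
During the `m`-th period the urn grows from `s₀ + (p+ℓ)m` balls one ball at a time, so
`h_{pm+i}` is the product of the period blocks `∏_{j<p} (s₀ + (p+ℓ)k + j)`, `k < m`, and the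
partial block `∏_{j<i} (s₀ + (p+ℓ)m + j)`. The partial block is the Gamma ratio
`Γ(s₀+(p+ℓ)m+i)/Γ(s₀+(p+ℓ)m)`. Regrouping the full blocks by residue `j` gives the rising
products `∏_{k<m} (s₀ + j + (p+ℓ)k) = (p+ℓ)^m Γ(m + (s₀+j)/(p+ℓ)) / Γ((s₀+j)/(p+ℓ))`.
-/

open Finset

namespace histCount

variable {p ℓ s : ℕ}

theorem mul_add_succ {m i : ℕ} (hi : i < p) :
    histCount p ℓ s (p * m + i + 1) = (s + (p + ℓ) * m + i) * histCount p ℓ s (p * m + i) := by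
  have hdiv : (p * m + i) / p = m := by
    rw [Nat.mul_add_div (by omega), Nat.div_eq_of_lt hi, add_zero]
  rw [histCount, hdiv]
  ring

theorem mul_add {m i : ℕ} (hi : i ≤ p) :
    histCount p ℓ s (p * m + i) =
      histCount p ℓ s (p * m) * ∏ j ∈ range i, (s + (p + ℓ) * m + j) := by
  induction i with
  | zero => simp
  | succ i ih =>
    rw [← add_assoc, mul_add_succ (by omega), ih (by omega), prod_range_succ]
    ring

theorem mul (m : ℕ) :
    histCount p ℓ s (p * m) = ∏ k ∈ range m, ∏ j ∈ range p, (s + (p + ℓ) * k + j) := by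
  induction m with
  | zero => simp [histCount]
  | succ m ih => rw [Nat.mul_succ, mul_add le_rfl, ih, prod_range_succ]

end histCount

theorem Real.Gamma_add_nat_div_Gamma {x : ℝ} (hx : 0 < x) (n : ℕ) :
    Gamma (x + n) / Gamma x = ∏ j ∈ range n, (x + j) := by
  rw [div_eq_iff (Gamma_pos_of_pos hx).ne']
  induction n with
  | zero => simp
  | succ n ih =>
    rw [Nat.cast_succ, ← add_assoc, Gamma_add_one (by positivity), ih, prod_range_succ]
    ring

theorem Real.pow_mul_Gamma_add_div_div_Gamma {q c : ℝ} (hq : 0 < q) (hc : 0 < c) (m : ℕ) :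
    q ^ m * (Gamma (m + c / q) / Gamma (c / q)) = ∏ k ∈ range m, (c + q * k) := by
  rw [add_comm, Gamma_add_nat_div_Gamma (by positivity)]
  calc q ^ m * ∏ k ∈ range m, (c / q + k) = ∏ k ∈ range m, q * (c / q + k) := by
        rw [← pow_card_mul_prod, card_range]
    _ = ∏ k ∈ range m, (c + q * k) := prod_congr rfl fun k _ => by field_simp

theorem histCount_hypergeometric_closed_form_general
    (p ℓ b₀ w₀ : ℕ) (hb : 1 ≤ b₀) (m i : ℕ) (hi : i ≤ p - 1) :
    (histCount p ℓ (b₀ + w₀) (p * m + i) : ℝ) =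
      ((p : ℝ) + (ℓ : ℝ)) ^ (p * m) *
        (Real.Gamma (((b₀ + w₀ : ℕ) : ℝ) + ((p : ℝ) + (ℓ : ℝ)) * (m : ℝ) + (i : ℝ)) /
          Real.Gamma (((b₀ + w₀ : ℕ) : ℝ) + ((p : ℝ) + (ℓ : ℝ)) * (m : ℝ))) *
        ∏ j ∈ Finset.range p,
          Real.Gamma ((m : ℝ) + ((b₀ + w₀ + j : ℕ) : ℝ) / ((p : ℝ) + (ℓ : ℝ))) /
            Real.Gamma (((b₀ + w₀ + j : ℕ) : ℝ) / ((p : ℝ) + (ℓ : ℝ))) := by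
  have hs : (0 : ℝ) < ((b₀ + w₀ : ℕ) : ℝ) := Nat.cast_pos.2 (by omega)
  have hpow : ((p : ℝ) + ℓ) ^ (p * m) = ∏ _j ∈ range p, ((p : ℝ) + ℓ) ^ m := by
    rw [prod_const, card_range, ← pow_mul, mul_comm]
  have hresidue : ∀ j ∈ range p,
      ((p : ℝ) + ℓ) ^ m * (Gamma (m + ((b₀ + w₀ + j : ℕ) : ℝ) / ((p : ℝ) + ℓ)) /
        Gamma (((b₀ + w₀ + j : ℕ) : ℝ) / ((p : ℝ) + ℓ))) =
      ∏ k ∈ range m, (((b₀ + w₀ + j : ℕ) : ℝ) + ((p : ℝ) + ℓ) * k) := fun j hj => by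
    have : 0 < p := by grind
    exact pow_mul_Gamma_add_div_div_Gamma (by positivity) (by positivity) m
  rw [Gamma_add_nat_div_Gamma (by positivity), hpow, mul_right_comm, ← prod_mul_distrib,
    prod_congr rfl hresidue, prod_comm, histCount.mul_add (by omega), histCount.mul]
  push_cast
  congr! 3 with k _ j _
  ring

/-- **Theorem (hypergeometric closed form for the number of histories).**
For the Young–Pólya urn of period `p` and parameter `ℓ` with `s₀ = b₀ + w₀` initial balls,
for all `m ≥ 0` and `0 ≤ i ≤ p-1`,
`h_{pm+i} = (p+ℓ)^{pm} · Γ(s₀+(p+ℓ)m+i)/Γ(s₀+(p+ℓ)m) · ∏_{j=0}^{p-1} Γ(m+(s₀+j)/(p+ℓ))/Γ((s₀+j)/(p+ℓ))`. -/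
theorem histCount_hypergeometric_closed_form
    (p ℓ b₀ w₀ : ℕ) (hp : 1 ≤ p) (hb : 1 ≤ b₀) (m i : ℕ) (hi : i ≤ p - 1) :
    (histCount p ℓ (b₀ + w₀) (p * m + i) : ℝ) =
      ((p : ℝ) + (ℓ : ℝ)) ^ (p * m) *
        (Real.Gamma (((b₀ + w₀ : ℕ) : ℝ) + ((p : ℝ) + (ℓ : ℝ)) * (m : ℝ) + (i : ℝ)) /
          Real.Gamma (((b₀ + w₀ : ℕ) : ℝ) + ((p : ℝ) + (ℓ : ℝ)) * (m : ℝ))) *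
        ∏ j ∈ Finset.range p,
          Real.Gamma ((m : ℝ) + ((b₀ + w₀ + j : ℕ) : ℝ) / ((p : ℝ) + (ℓ : ℝ))) /
            Real.Gamma (((b₀ + w₀ + j : ℕ) : ℝ) / ((p : ℝ) + (ℓ : ℝ))) :=
  histCount_hypergeometric_closed_form_general p ℓ b₀ w₀ hb m i hi
end

section
/- Let p ≥ 1, ℓ ≥ 0, b₀ ≥ 1, w₀ ≥ 0 be integers and s₀ = b₀ + w₀. Let B_n be the number of black balls after n steps in the Young–Pólya urn of period p and parameter ℓ with initial composition (b₀, w₀). Then for all integers m ≥ 0 and 0 ≤ i ≤ p−1, the expectation of B_{pm+i} is exactly E[B_{pm+i}] = b₀ · (Γ(s₀/(p+ℓ))/Γ((s₀+p)/(p+ℓ))) · (m + (s₀+i)/(p+ℓ)) · Γ(m + (s₀+p)/(p+ℓ))/Γ(m + 1 + s₀/(p+ℓ)). -/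
open Real

/-- `urnMass p ℓ b₀ w₀ n b` is the probability that the Young–Pólya urn of period `p`
and parameter `ℓ` with initial composition `(b₀, w₀)` contains `b` black balls after `n`
steps (the total number of balls after `n` steps is `b₀ + w₀ + n + ℓ⌊n/p⌋`). -/
noncomputable def urnMass (p ℓ b₀ w₀ : ℕ) : ℕ → ℕ → ℝ
  | 0, b => if b = b₀ then 1 else 0
  | n + 1, b =>
    urnMass p ℓ b₀ w₀ n (b - 1) *
        (((b - 1 : ℕ) : ℝ) / ((b₀ + w₀ + n + ℓ * (n / p) : ℕ) : ℝ)) +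
      urnMass p ℓ b₀ w₀ n b *
        ((((b₀ + w₀ + n + ℓ * (n / p) : ℕ) : ℝ) - (b : ℝ)) / ((b₀ + w₀ + n + ℓ * (n / p) : ℕ) : ℝ))

namespace YPaux

/-- finite support of the urn measure -/
lemma supp (p ℓ b₀ w₀ : ℕ) : ∀ n b, b₀ + n < b → urnMass p ℓ b₀ w₀ n b = 0 := by
  intro n
  induction n with
  | zero =>
    intro b hb
    rw [urnMass]
    have : b ≠ b₀ := by omega
    simp [this]
  | succ n ih =>
    intro b hb
    rw [urnMass, ih (b-1) (by omega), ih b (by omega)]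
    ring

/-- the finite-sum expectation -/
noncomputable def E (p ℓ b₀ w₀ n : ℕ) : ℝ :=
  ∑ b ∈ Finset.range (b₀ + n + 1), (b : ℝ) * urnMass p ℓ b₀ w₀ n b

lemma tsum_eq_E (p ℓ b₀ w₀ n : ℕ) :
    (∑' b : ℕ, (b : ℝ) * urnMass p ℓ b₀ w₀ n b) = E p ℓ b₀ w₀ n := by
  apply tsum_eq_sum
  intro b hb
  rw [supp p ℓ b₀ w₀ n b (by simp [Finset.mem_range] at hb; omega), mul_zero]

lemma E_zero (p ℓ b₀ w₀ : ℕ) : E p ℓ b₀ w₀ 0 = b₀ := by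
  unfold E
  rw [show b₀ + 0 + 1 = b₀ + 1 from rfl]
  rw [Finset.sum_eq_single b₀]
  · rw [urnMass]; simp
  · intro b _ hb; rw [urnMass]; simp [hb]
  · intro h; exact absurd (Finset.self_mem_range_succ b₀) h

lemma E_succ (p ℓ b₀ w₀ : ℕ) (hb : 1 ≤ b₀) (n : ℕ) :
    E p ℓ b₀ w₀ (n + 1) =
      E p ℓ b₀ w₀ n *
        ((((b₀ + w₀ + n + ℓ * (n / p) : ℕ) : ℝ) + 1) / ((b₀ + w₀ + n + ℓ * (n / p) : ℕ) : ℝ)) := by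
  have hs : (0:ℝ) < ((b₀ + w₀ + n + ℓ * (n / p) : ℕ) : ℝ) := by
    have : 1 ≤ b₀ + w₀ + n + ℓ * (n / p) := by omega
    exact_mod_cast Nat.lt_of_lt_of_le Nat.zero_lt_one this
  set S : ℝ := ((b₀ + w₀ + n + ℓ * (n / p) : ℕ) : ℝ) with hS
  have hS0 : S ≠ 0 := ne_of_gt hs
  unfold E
  have expand : ∀ b : ℕ, (b : ℝ) * urnMass p ℓ b₀ w₀ (n+1) b =
      (b : ℝ) * (urnMass p ℓ b₀ w₀ n (b - 1) * (((b - 1 : ℕ) : ℝ) / S)) +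
      (b : ℝ) * (urnMass p ℓ b₀ w₀ n b * ((S - (b : ℝ)) / S)) := by
    intro b
    rw [urnMass]
    ring
  calc ∑ b ∈ Finset.range (b₀ + (n+1) + 1), (b : ℝ) * urnMass p ℓ b₀ w₀ (n+1) b
      = ∑ b ∈ Finset.range (b₀ + n + 2),
          ((b : ℝ) * (urnMass p ℓ b₀ w₀ n (b - 1) * (((b - 1 : ℕ) : ℝ) / S)) +
           (b : ℝ) * (urnMass p ℓ b₀ w₀ n b * ((S - (b : ℝ)) / S))) := by
        rw [show b₀ + (n+1) + 1 = b₀ + n + 2 from rfl]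
        exact Finset.sum_congr rfl fun b _ => expand b
    _ = (∑ b ∈ Finset.range (b₀ + n + 2), (b : ℝ) * (urnMass p ℓ b₀ w₀ n (b - 1) * (((b - 1 : ℕ) : ℝ) / S))) +
        (∑ b ∈ Finset.range (b₀ + n + 2), (b : ℝ) * (urnMass p ℓ b₀ w₀ n b * ((S - (b : ℝ)) / S))) :=
        Finset.sum_add_distrib
    _ = (∑ c ∈ Finset.range (b₀ + n + 1), ((c:ℝ)+1) * (urnMass p ℓ b₀ w₀ n c * ((c : ℝ) / S))) +
        (∑ b ∈ Finset.range (b₀ + n + 1), (b : ℝ) * (urnMass p ℓ b₀ w₀ n b * ((S - (b : ℝ)) / S))) := by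
        congr 1
        · rw [Finset.sum_range_succ' (fun b => (b : ℝ) * (urnMass p ℓ b₀ w₀ n (b - 1) * (((b - 1 : ℕ) : ℝ) / S)))]
          simp only [Nat.add_sub_cancel, Nat.cast_zero, zero_mul, add_zero, Nat.cast_add,
            Nat.cast_one]
        · rw [Finset.sum_range_succ, supp p ℓ b₀ w₀ n (b₀ + n + 1) (by omega)]
          simp
    _ = ∑ b ∈ Finset.range (b₀ + n + 1), ((b : ℝ) * urnMass p ℓ b₀ w₀ n b) * ((S + 1) / S) := by
        rw [← Finset.sum_add_distrib]
        apply Finset.sum_congr rfl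
        intro b _
        field_simp
        ring
    _ = (∑ b ∈ Finset.range (b₀ + n + 1), (b : ℝ) * urnMass p ℓ b₀ w₀ n b) * ((S + 1) / S) :=
        (Finset.sum_mul _ _ _).symm

/-- the closed form -/
noncomputable def G (p ℓ b₀ w₀ m i : ℕ) : ℝ :=
  (b₀ : ℝ) *
    (Real.Gamma (((b₀ + w₀ : ℕ) : ℝ) / ((p : ℝ) + (ℓ : ℝ))) /
      Real.Gamma ((((b₀ + w₀ : ℕ) : ℝ) + (p : ℝ)) / ((p : ℝ) + (ℓ : ℝ)))) *
    ((m : ℝ) + (((b₀ + w₀ : ℕ) : ℝ) + (i : ℝ)) / ((p : ℝ) + (ℓ : ℝ))) *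
    (Real.Gamma ((m : ℝ) + (((b₀ + w₀ : ℕ) : ℝ) + (p : ℝ)) / ((p : ℝ) + (ℓ : ℝ))) /
      Real.Gamma ((m : ℝ) + 1 + ((b₀ + w₀ : ℕ) : ℝ) / ((p : ℝ) + (ℓ : ℝ))))

variable {p ℓ b₀ w₀ : ℕ}

lemma qpos (hp : 1 ≤ p) : (0:ℝ) < (p : ℝ) + (ℓ : ℝ) := by
  have : (1:ℝ) ≤ (p:ℝ) := by exact_mod_cast hp
  positivity

lemma s0pos (hb : 1 ≤ b₀) : (0:ℝ) < ((b₀ + w₀ : ℕ) : ℝ) := by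
  have : 1 ≤ b₀ + w₀ := by omega
  exact_mod_cast this

lemma G_zero (hp : 1 ≤ p) (hb : 1 ≤ b₀) : G p ℓ b₀ w₀ 0 0 = b₀ := by
  have hq := qpos (ℓ := ℓ) hp
  have hs := s0pos (b₀ := b₀) (w₀ := w₀) hb
  have hx : (0:ℝ) < ((b₀ + w₀ : ℕ) : ℝ) / ((p : ℝ) + (ℓ : ℝ)) := div_pos hs hq
  unfold G
  rw [show ((0:ℕ):ℝ) + 1 + ((b₀ + w₀ : ℕ) : ℝ) / ((p : ℝ) + (ℓ : ℝ))
      = (((b₀ + w₀ : ℕ) : ℝ) / ((p : ℝ) + (ℓ : ℝ))) + 1 by push_cast; ring,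
    Real.Gamma_add_one (ne_of_gt hx)]
  have hg1 : Real.Gamma (((b₀ + w₀ : ℕ) : ℝ) / ((p : ℝ) + (ℓ : ℝ))) ≠ 0 :=
    ne_of_gt (Real.Gamma_pos_of_pos hx)
  have hg2 : Real.Gamma ((((b₀ + w₀ : ℕ) : ℝ) + (p:ℝ)) / ((p : ℝ) + (ℓ : ℝ))) ≠ 0 := by
    apply ne_of_gt (Real.Gamma_pos_of_pos _)
    apply div_pos _ hq
    have : (0:ℝ) ≤ (p:ℝ) := Nat.cast_nonneg p
    linarith
  have hg3 : Real.Gamma (((0:ℕ):ℝ) + (((b₀ + w₀ : ℕ) : ℝ) + (p:ℝ)) / ((p : ℝ) + (ℓ : ℝ))) ≠ 0 := by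
    simpa using hg2
  push_cast
  field_simp
  ring

lemma G_step (hp : 1 ≤ p) (hb : 1 ≤ b₀) (m i : ℕ) :
    G p ℓ b₀ w₀ m (i + 1) =
      G p ℓ b₀ w₀ m i *
        (((((p:ℝ) + (ℓ:ℝ)) * m + ((b₀ + w₀ : ℕ) : ℝ) + i) + 1) /
          ((((p:ℝ) + (ℓ:ℝ)) * m + ((b₀ + w₀ : ℕ) : ℝ) + i))) := by
  have hq := qpos (ℓ := ℓ) hp
  have hs := s0pos (b₀ := b₀) (w₀ := w₀) hb
  have hX : (0:ℝ) < ((p:ℝ) + (ℓ:ℝ)) * m + ((b₀ + w₀ : ℕ) : ℝ) + i := by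
    have : (0:ℝ) ≤ ((p:ℝ)+(ℓ:ℝ)) * m := by positivity
    have : (0:ℝ) ≤ (i:ℝ) := Nat.cast_nonneg i
    linarith [mul_nonneg (le_of_lt hq) (Nat.cast_nonneg m : (0:ℝ) ≤ (m:ℝ))]
  unfold G
  have key : ((m : ℝ) + (((b₀ + w₀ : ℕ) : ℝ) + ((i:ℝ)+1)) / ((p : ℝ) + (ℓ : ℝ)))
      = ((m : ℝ) + (((b₀ + w₀ : ℕ) : ℝ) + (i : ℝ)) / ((p : ℝ) + (ℓ : ℝ))) *
        (((((p:ℝ) + (ℓ:ℝ)) * m + ((b₀ + w₀ : ℕ) : ℝ) + i) + 1) /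
          ((((p:ℝ) + (ℓ:ℝ)) * m + ((b₀ + w₀ : ℕ) : ℝ) + i))) := by
    have hq' : ((p:ℝ) + (ℓ:ℝ)) ≠ 0 := ne_of_gt hq
    have hX' : (((p:ℝ) + (ℓ:ℝ)) * m + ((b₀ + w₀ : ℕ) : ℝ) + i) ≠ 0 := ne_of_gt hX
    field_simp
    ring
  push_cast
  push_cast at key
  rw [key]
  ring

lemma G_wrap (hp : 1 ≤ p) (hb : 1 ≤ b₀) (m : ℕ) :
    G p ℓ b₀ w₀ m p = G p ℓ b₀ w₀ (m + 1) 0 := by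
  have hq := qpos (ℓ := ℓ) hp
  have hs := s0pos (b₀ := b₀) (w₀ := w₀) hb
  have hA : (0:ℝ) < (m:ℝ) + (((b₀ + w₀ : ℕ) : ℝ) + (p:ℝ)) / ((p:ℝ) + (ℓ:ℝ)) := by
    have h1 : (0:ℝ) < (((b₀ + w₀ : ℕ) : ℝ) + (p:ℝ)) / ((p:ℝ) + (ℓ:ℝ)) := by
      apply div_pos _ hq
      have : (0:ℝ) ≤ (p:ℝ) := Nat.cast_nonneg p
      linarith
    have : (0:ℝ) ≤ (m:ℝ) := Nat.cast_nonneg m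
    linarith
  have hB : (0:ℝ) < (m:ℝ) + 1 + ((b₀ + w₀ : ℕ) : ℝ) / ((p:ℝ) + (ℓ:ℝ)) := by
    have h1 : (0:ℝ) < ((b₀ + w₀ : ℕ) : ℝ) / ((p:ℝ) + (ℓ:ℝ)) := div_pos hs hq
    have : (0:ℝ) ≤ (m:ℝ) := Nat.cast_nonneg m
    linarith
  have hΓb : Real.Gamma ((m:ℝ) + 1 + ((b₀ + w₀ : ℕ) : ℝ) / ((p:ℝ) + (ℓ:ℝ))) ≠ 0 :=
    ne_of_gt (Real.Gamma_pos_of_pos hB)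
  have hB' : ((m:ℝ) + 1 + ((b₀ + w₀ : ℕ) : ℝ) / ((p:ℝ) + (ℓ:ℝ))) ≠ 0 := ne_of_gt hB
  unfold G
  rw [show (((m+1:ℕ)):ℝ) + (((b₀ + w₀ : ℕ) : ℝ) + (p:ℝ)) / ((p:ℝ) + (ℓ:ℝ))
      = ((m:ℝ) + (((b₀ + w₀ : ℕ) : ℝ) + (p:ℝ)) / ((p:ℝ) + (ℓ:ℝ))) + 1 by push_cast; ring,
    Real.Gamma_add_one (ne_of_gt hA),
    show (((m+1:ℕ)):ℝ) + 1 + ((b₀ + w₀ : ℕ) : ℝ) / ((p:ℝ) + (ℓ:ℝ))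
      = ((m:ℝ) + 1 + ((b₀ + w₀ : ℕ) : ℝ) / ((p:ℝ) + (ℓ:ℝ))) + 1 by push_cast; ring,
    Real.Gamma_add_one hB']
  push_cast
  field_simp
  ring

lemma E_eq_G (hp : 1 ≤ p) (hb : 1 ≤ b₀) (n : ℕ) :
    E p ℓ b₀ w₀ n = G p ℓ b₀ w₀ (n / p) (n % p) := by
  induction n with
  | zero =>
    rw [E_zero, Nat.zero_div, Nat.zero_mod, G_zero hp hb]
  | succ n ih =>
    rw [E_succ p ℓ b₀ w₀ hb n, ih]
    have hcast : ((b₀ + w₀ + n + ℓ * (n / p) : ℕ) : ℝ)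
        = ((p:ℝ) + (ℓ:ℝ)) * (n / p : ℕ) + ((b₀ + w₀ : ℕ) : ℝ) + ((n % p : ℕ) : ℝ) := by
      have h1 : b₀ + w₀ + n + ℓ * (n / p) = (p + ℓ) * (n / p) + (b₀ + w₀) + n % p := by
        have hd := Nat.div_add_mod n p
        rw [Nat.add_mul]
        omega
      rw [h1]
      push_cast
      ring
    rw [hcast, ← G_step hp hb (n / p) (n % p)]
    rcases Nat.lt_or_ge (n % p + 1) p with hlt | hge
    · have h1 : (n + 1) / p = n / p := by
        have hd := Nat.div_add_mod n p
        have : n + 1 = p * (n / p) + (n % p + 1) := by omega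
        rw [this, Nat.mul_add_div (by omega), Nat.div_eq_of_lt hlt, Nat.add_zero]
      have h2 : (n + 1) % p = n % p + 1 := by
        have hd := Nat.div_add_mod n p
        have : n + 1 = p * (n / p) + (n % p + 1) := by omega
        rw [this, Nat.mul_add_mod, Nat.mod_eq_of_lt hlt]
      rw [h1, h2]
    · have hmod : n % p < p := Nat.mod_lt n (by omega)
      have heq : n % p + 1 = p := by omega
      have hd := Nat.div_add_mod n p
      have hn1 : n + 1 = p * (n / p + 1) := by
        rw [Nat.mul_succ]
        omega
      have h1 : (n + 1) / p = n / p + 1 := by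
        rw [hn1, Nat.mul_div_cancel_left _ (by omega : 0 < p)]
      have h2 : (n + 1) % p = 0 := by
        rw [hn1, Nat.mul_mod_right]
      rw [h1, h2, heq, G_wrap hp hb]

end YPaux

/-- **Theorem (exact mean of Young–Pólya urns).**
With `s₀ = b₀ + w₀`, for all `m ≥ 0` and `0 ≤ i ≤ p-1`,
`E[B_{pm+i}] = b₀ · (Γ(s₀/(p+ℓ))/Γ((s₀+p)/(p+ℓ))) · (m + (s₀+i)/(p+ℓ)) ·
Γ(m+(s₀+p)/(p+ℓ))/Γ(m+1+s₀/(p+ℓ))`. -/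
theorem young_polya_urn_mean_exact
    (p ℓ b₀ w₀ : ℕ) (hp : 1 ≤ p) (hb : 1 ≤ b₀) (m i : ℕ) (hi : i ≤ p - 1) :
    (∑' b : ℕ, (b : ℝ) * urnMass p ℓ b₀ w₀ (p * m + i) b) =
      (b₀ : ℝ) *
        (Real.Gamma (((b₀ + w₀ : ℕ) : ℝ) / ((p : ℝ) + (ℓ : ℝ))) /
          Real.Gamma ((((b₀ + w₀ : ℕ) : ℝ) + (p : ℝ)) / ((p : ℝ) + (ℓ : ℝ)))) *
        ((m : ℝ) + (((b₀ + w₀ : ℕ) : ℝ) + (i : ℝ)) / ((p : ℝ) + (ℓ : ℝ))) *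
        (Real.Gamma ((m : ℝ) + (((b₀ + w₀ : ℕ) : ℝ) + (p : ℝ)) / ((p : ℝ) + (ℓ : ℝ))) /
          Real.Gamma ((m : ℝ) + 1 + ((b₀ + w₀ : ℕ) : ℝ) / ((p : ℝ) + (ℓ : ℝ)))) := by
  have hip : i < p := by omega
  have hdiv : (p * m + i) / p = m := by
    rw [Nat.mul_add_div (by omega), Nat.div_eq_of_lt hip, Nat.add_zero]
  have hmod : (p * m + i) % p = i := by
    rw [Nat.mul_add_mod, Nat.mod_eq_of_lt hip]
  rw [YPaux.tsum_eq_E, YPaux.E_eq_G hp hb, hdiv, hmod]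
  rfl
end

section
/- Let p ≥ 1, ℓ ≥ 0, b₀ ≥ 1, w₀ ≥ 0 be integers, s₀ = b₀ + w₀ and δ = p/(p+ℓ). Let B_n be the number of black balls after n steps in the Young–Pólya urn of period p and parameter ℓ with initial composition (b₀, w₀). Then E[B_n] = b₀ · (Γ(s₀/(p+ℓ))/Γ((s₀+p)/(p+ℓ))) · (n/p)^δ · (1 + O(1/n)); that is, there is a constant C such that for all n ≥ 1, |E[B_n] − b₀ (Γ(s₀/(p+ℓ))/Γ((s₀+p)/(p+ℓ))) (n/p)^δ| ≤ C·n^{δ−1}. -/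
/-!
Drawing a black ball with probability `B/S` and returning it with a copy multiplies the mean number
of black balls by `1 + 1/S_n`, where `S_n = s₀ + n + ℓ⌊n/p⌋` is the number of balls after `n`
steps; hence `E[B_n] = b₀ ∏_{k<n} (1 + 1/S_k)`. Within a period the factors telescope, so along
`n = mp` the product is `∏_{j<m} (α + j)/(β + j)` with `α = (s₀+p)/(p+ℓ)` and `β = s₀/(p+ℓ)`,
which by Euler's limit formula is `~ Γ(β)/Γ(α) · m^(α-β)`, and `α - β = δ`. For the rate, the
normalised mean `U_n = E[B_n] / (b₀ (n/p)^δ)` has ratios `(1 + 1/S_n)/(1 + 1/n)^δ = 1 + O(1/n²)`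
because `1/S_n = δ/n + O(1/n²)`; so `U` is bounded, its increments are `O(1/n²)`, and `U_n` is
within `O(1/n)` of its limit.
-/

open Real

open Filter Topology Finset

theorem inv_sq_le_two_mul_inv_sub_inv {x : ℝ} (hx : 1 ≤ x) :
    1 / x ^ 2 ≤ 2 * (1 / x - 1 / (x + 1)) := by
  rw [div_sub_div _ _ (by positivity) (by positivity), mul_div_assoc',
    div_le_div_iff₀ (by positivity) (by positivity)]
  nlinarith

theorem le_mul_exp_of_le_mul_one_add_div_sq {u : ℕ → ℝ} {c : ℝ} (hc : 0 ≤ c)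
    (hu : ∀ n, 0 ≤ u n) (h : ∀ n ≥ 1, u (n + 1) ≤ u n * (1 + c / n ^ 2)) {n : ℕ} (hn : 1 ≤ n) :
    u n ≤ u 1 * Real.exp (2 * c) := by
  have growth : ∀ n ≥ 1, u n ≤ u 1 * Real.exp (2 * c * (1 - 1 / n)) := by
    intro n hn
    induction n, hn using Nat.le_induction with
    | base => simp
    | succ n hn ih =>
      have hn' : (1 : ℝ) ≤ n := by exact_mod_cast hn
      calc u (n + 1) ≤ u n * (1 + c / n ^ 2) := h n hn
        _ ≤ u n * Real.exp (c / n ^ 2) := by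
          gcongr
          · exact hu n
          · linarith [Real.add_one_le_exp (c / n ^ 2)]
        _ ≤ u 1 * Real.exp (2 * c * (1 - 1 / n)) * Real.exp (c / n ^ 2) := by gcongr
        _ = u 1 * Real.exp (2 * c * (1 - 1 / n) + c * (1 / n ^ 2)) := by
          rw [mul_assoc, ← Real.exp_add, mul_one_div]
        _ ≤ u 1 * Real.exp (2 * c * (1 - 1 / (n + 1 : ℕ))) := by
          have := inv_sq_le_two_mul_inv_sub_inv hn'
          gcongr
          · exact hu 1
          · push_cast; nlinarith
  calc u n ≤ u 1 * Real.exp (2 * c * (1 - 1 / n)) := growth n hn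
    _ ≤ u 1 * Real.exp (2 * c) := by
      have : (0 : ℝ) ≤ 1 / n := by positivity
      gcongr u 1 * Real.exp ?_
      · exact hu 1
      · nlinarith

theorem abs_sub_le_of_abs_succ_sub_le {u : ℕ → ℝ} {K : ℝ}
    (h : ∀ n ≥ 1, |u (n + 1) - u n| ≤ K / n ^ 2) {n m : ℕ} (hn : 1 ≤ n) (hnm : n ≤ m) :
    |u m - u n| ≤ 2 * K * (1 / n - 1 / m) := by
  have hK : 0 ≤ K := by simpa using (abs_nonneg _).trans (h 1 le_rfl)
  induction m, hnm using Nat.le_induction with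
  | base => simp
  | succ m hm ih =>
    have hm' : (1 : ℝ) ≤ m := by exact_mod_cast hn.trans hm
    have := inv_sq_le_two_mul_inv_sub_inv hm'
    calc |u (m + 1) - u n| ≤ |u (m + 1) - u m| + |u m - u n| := abs_sub_le _ _ _
      _ ≤ K * (1 / m ^ 2) + 2 * K * (1 / n - 1 / m) := by
        rw [mul_one_div]; exact add_le_add (h m (hn.trans hm)) ih
      _ ≤ 2 * K * (1 / n - 1 / (m + 1 : ℕ)) := by push_cast; nlinarith

theorem abs_sub_le_of_tendsto_comp_of_abs_succ_sub_le {u : ℕ → ℝ} {K L : ℝ} {φ : ℕ → ℕ}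
    (hφ : Tendsto φ atTop atTop) (hL : Tendsto (fun m => u (φ m)) atTop (𝓝 L))
    (h : ∀ n ≥ 1, |u (n + 1) - u n| ≤ K / n ^ 2) {n : ℕ} (hn : 1 ≤ n) :
    |u n - L| ≤ 2 * K / n := by
  have hK : 0 ≤ K := by simpa using (abs_nonneg _).trans (h 1 le_rfl)
  refine le_of_tendsto ((tendsto_const_nhds.sub hL).abs) ?_
  filter_upwards [hφ.eventually_ge_atTop n] with m hm
  have : (0 : ℝ) ≤ 1 / φ m := by positivity
  calc |u n - u (φ m)| = |u (φ m) - u n| := abs_sub_comm _ _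
    _ ≤ 2 * K * (1 / n - 1 / φ m) := abs_sub_le_of_abs_succ_sub_le h hn hm
    _ ≤ 2 * K / n := by rw [mul_sub, mul_one_div]; nlinarith

theorem abs_one_add_rpow_sub_one_add_mul_le_sq {x d : ℝ} (hx : 0 ≤ x) (hd0 : 0 ≤ d)
    (hd1 : d ≤ 1) :
    |(1 + x) ^ d - (1 + d * x)| ≤ x ^ 2 := by
  have hx1 : (0 : ℝ) < 1 + x := by linarith
  have upper : (1 + x) ^ d ≤ 1 + d * x := rpow_one_add_le_one_add_mul_self (by linarith) hd0 hd1
  -- the complementary exponent `1 - d` gives the lower bound via `(1+x)^d (1+x)^(1-d) = 1+x`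
  have lower : 1 + x ≤ (1 + x) ^ d * (1 + (1 - d) * x) := by
    calc 1 + x = (1 + x) ^ d * (1 + x) ^ (1 - d) := by rw [← Real.rpow_add hx1]; simp
      _ ≤ (1 + x) ^ d * (1 + (1 - d) * x) := by
        gcongr
        exact rpow_one_add_le_one_add_mul_self (by linarith) (by linarith) (by linarith)
  have hpos : 0 < (1 + x) ^ d := Real.rpow_pos_of_pos hx1 d
  rw [abs_le]
  constructor
  · have : 0 ≤ 1 + (1 - d) * x := by nlinarith
    nlinarith [sq_nonneg (x * (2 * d - 1)), sq_nonneg x,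
      mul_nonneg (sub_nonneg.2 hd1) (mul_nonneg (mul_nonneg hx hx) hx)]
  · nlinarith

theorem tendsto_prod_add_div_add_div_rpow {α β : ℝ} (hα : 0 < α) (hβ : 0 < β) :
    Tendsto (fun m : ℕ => (∏ j ∈ range m, (α + j) / (β + j)) / (m : ℝ) ^ (α - β)) atTop
      (𝓝 (Real.Gamma β / Real.Gamma α)) := by
  -- Euler's limit formula: the left side is `GammaSeq β m / GammaSeq α m · (β + m)/(α + m)`
  have hlim := ((Real.GammaSeq_tendsto_Gamma β).div (Real.GammaSeq_tendsto_Gamma α)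
    (Real.Gamma_pos_of_pos hα).ne').mul
      (tendsto_add_mul_div_add_mul_atTop_nhds β α 1 one_ne_zero)
  rw [div_one, mul_one] at hlim
  refine hlim.congr' ?_
  filter_upwards [eventually_ge_atTop 1] with m hm
  have hm' : (0 : ℝ) < m := by exact_mod_cast hm
  have hprod : ∀ γ : ℝ, 0 < γ → 0 < ∏ j ∈ range m, (γ + j) :=
    fun γ hγ => prod_pos fun j _ => by positivity
  have hPα := hprod α hα
  have hPβ := hprod β hβ
  have hfac : (0 : ℝ) < m.factorial := by exact_mod_cast m.factorial_pos
  simp only [Pi.div_apply, Real.GammaSeq, prod_range_succ, prod_div_distrib, Real.rpow_sub hm',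
    one_mul]
  field_simp

theorem prod_range_one_add_inv_add {a : ℝ} (ha : 0 < a) (k : ℕ) :
    ∏ i ∈ range k, (1 + 1 / (a + i)) = (a + k) / a := by
  induction k with
  | zero => simp [ha.ne']
  | succ k ih =>
    rw [prod_range_succ, ih]
    field_simp
    push_cast
    ring

namespace YoungPolyaUrn

def total (p ℓ s n : ℕ) : ℕ := s + n + ℓ * (n / p)

noncomputable def meanGrowth (p ℓ s n : ℕ) : ℝ := ∏ k ∈ range n, (1 + 1 / (total p ℓ s k : ℝ))

theorem urnMass_eq_zero_of_lt {p ℓ b₀ w₀ n b : ℕ} (h : b₀ + n < b) :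
    urnMass p ℓ b₀ w₀ n b = 0 := by
  induction n generalizing b with
  | zero => rw [urnMass, if_neg (by omega)]
  | succ n ih =>
    simp [urnMass, ih (show b₀ + n < b - 1 by omega), ih (show b₀ + n < b by omega)]

theorem sum_mul_urnMass_succ {p ℓ b₀ w₀ : ℕ} (hs : 0 < b₀ + w₀) (n : ℕ) :
    ∑ b ∈ range (b₀ + n + 1 + 1), (b : ℝ) * urnMass p ℓ b₀ w₀ (n + 1) b =
      (1 + 1 / (total p ℓ (b₀ + w₀) n : ℝ)) *
        ∑ b ∈ range (b₀ + n + 1), (b : ℝ) * urnMass p ℓ b₀ w₀ n b := by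
  set S : ℝ := (total p ℓ (b₀ + w₀) n : ℝ)
  have hS : 0 < S := by unfold S total; positivity
  set μ := urnMass p ℓ b₀ w₀ n
  have hμ : μ (b₀ + n + 1) = 0 := urnMass_eq_zero_of_lt (by omega)
  have step : ∀ b : ℕ, (b : ℝ) * urnMass p ℓ b₀ w₀ (n + 1) b =
      b * (μ (b - 1) * ((b - 1 : ℕ) / S)) + b * (μ b * ((S - b) / S)) := fun b => by
    rw [urnMass, mul_add]; rfl
  simp only [step, sum_add_distrib]
  rw [sum_range_succ' (fun b : ℕ => (b : ℝ) * (μ (b - 1) * ((b - 1 : ℕ) / S))),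
    sum_range_succ (fun b : ℕ => (b : ℝ) * (μ b * ((S - b) / S))), hμ, mul_sum]
  simp only [Nat.cast_zero, zero_mul, mul_zero, add_zero, Nat.add_sub_cancel, ← sum_add_distrib]
  refine sum_congr rfl fun i _ => ?_
  push_cast
  field_simp
  ring

theorem tsum_mul_urnMass {p ℓ b₀ w₀ : ℕ} (hs : 0 < b₀ + w₀) (n : ℕ) :
    ∑' b : ℕ, (b : ℝ) * urnMass p ℓ b₀ w₀ n b = b₀ * meanGrowth p ℓ (b₀ + w₀) n := by
  rw [tsum_eq_sum (s := range (b₀ + n + 1)) fun b hb => by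
    rw [urnMass_eq_zero_of_lt (by simpa using hb), mul_zero]]
  induction n with
  | zero => simp [urnMass, meanGrowth]
  | succ n ih =>
    rw [show b₀ + (n + 1) + 1 = b₀ + n + 1 + 1 by ring, sum_mul_urnMass_succ hs, ih, meanGrowth,
      meanGrowth, prod_range_succ]
    ring

theorem cast_total_mul_add {p ℓ s i : ℕ} (m : ℕ) (hi : i < p) :
    (total p ℓ s (m * p + i) : ℝ) = s + (p + ℓ) * m + i := by
  have : (m * p + i) / p = m := by
    rw [Nat.add_comm, Nat.add_mul_div_right _ _ (by omega), Nat.div_eq_of_lt hi, zero_add]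
  simp only [total, this]
  push_cast
  ring

theorem meanGrowth_mul {p ℓ s : ℕ} (hp : 0 < p) (hs : 0 < s) (m : ℕ) :
    meanGrowth p ℓ s (m * p) =
      ∏ j ∈ range m, ((s + p) / (p + ℓ) + j) / (s / (p + ℓ) + j : ℝ) := by
  induction m with
  | zero => simp [meanGrowth]
  | succ m ih =>
    have ha : (0 : ℝ) < s + (p + ℓ) * m := by positivity
    rw [meanGrowth, Nat.succ_mul, prod_range_add, ← meanGrowth, ih, prod_range_succ]
    congr 1
    rw [prod_congr rfl fun i hi => by rw [cast_total_mul_add m (mem_range.1 hi)],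
      prod_range_one_add_inv_add ha]
    field_simp
    ring

noncomputable def normalizedMean (p ℓ s n : ℕ) : ℝ :=
  meanGrowth p ℓ s n / ((n : ℝ) / p) ^ ((p : ℝ) / (p + ℓ))

theorem normalizedMean_nonneg (p ℓ s n : ℕ) : 0 ≤ normalizedMean p ℓ s n := by
  unfold normalizedMean meanGrowth
  positivity

theorem tendsto_normalizedMean_mul {p ℓ s : ℕ} (hp : 0 < p) (hs : 0 < s) :
    Tendsto (fun m => normalizedMean p ℓ s (m * p)) atTop
      (𝓝 (Real.Gamma (s / (p + ℓ)) / Real.Gamma ((s + p) / (p + ℓ)))) := by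
  refine (tendsto_prod_add_div_add_div_rpow (by positivity) (by positivity)).congr fun m => ?_
  rw [normalizedMean, meanGrowth_mul hp hs, Nat.cast_mul,
    mul_div_cancel_right₀ _ (by positivity)]
  congr 2
  field_simp
  ring

theorem abs_inv_total_sub_le {p ℓ s n : ℕ} (hp : 0 < p) (hn : 1 ≤ n) :
    |1 / (total p ℓ s n : ℝ) - (p / (p + ℓ)) / n| ≤ (s + ℓ) / n ^ 2 := by
  set S : ℝ := (total p ℓ s n : ℝ)
  set q : ℝ := p + ℓ
  have hn' : (1 : ℝ) ≤ n := by exact_mod_cast hn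
  have hp' : (0 : ℝ) < p := by exact_mod_cast hp
  have hpq : (p : ℝ) ≤ q := by simp [q]
  have hnS : (n : ℝ) ≤ S := by
    simp only [S, total]; push_cast; linarith [(by positivity : (0 : ℝ) ≤ s + ℓ * ↑(n / p))]
  -- writing `n = p ⌊n/p⌋ + r` with `0 ≤ r < p`, the floor cancels: `q n - p S = ℓ r - p s`
  have hdiff : |q * n - p * S| ≤ p * (s + ℓ) := by
    have hdiv : (n : ℝ) = p * (n / p : ℕ) + (n % p : ℕ) := by
      exact_mod_cast (Nat.div_add_mod n p).symm
    have hr : ((n % p : ℕ) : ℝ) ≤ p := by exact_mod_cast (Nat.mod_lt n hp).le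
    have hqS : q * n - p * S = ℓ * (n % p : ℕ) - p * s := by
      simp only [q, S, total]; push_cast; rw [hdiv]; ring
    rw [hqS, abs_le]
    constructor <;> nlinarith [mul_le_mul_of_nonneg_left hr (Nat.cast_nonneg ℓ)]
  have hS : 0 < S := by linarith
  have hq : 0 < q := by linarith
  calc |1 / S - (p / q) / n| = |q * n - p * S| / (q * n * S) := by
        rw [show 1 / S - (p / q) / n = (q * n - p * S) / (q * n * S) by field_simp, abs_div,
          abs_of_pos (by positivity : 0 < q * n * S)]
    _ ≤ p * (s + ℓ) / (q * n * S) := by gcongr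
    _ ≤ (s + ℓ) / n ^ 2 := by
        rw [div_le_div_iff₀ (by positivity) (by positivity)]
        have : (p : ℝ) * (n * n) ≤ q * (n * S) := by gcongr
        nlinarith [(by positivity : (0 : ℝ) ≤ s + ℓ)]

theorem abs_one_add_inv_total_sub_rpow_le {p ℓ s n : ℕ} (hp : 0 < p) (hn : 1 ≤ n) :
    |(1 + 1 / (total p ℓ s n : ℝ)) - (1 + 1 / (n : ℝ)) ^ ((p : ℝ) / (p + ℓ))| ≤
      (s + ℓ + 1) / n ^ 2 := by
  have hδ : (p : ℝ) / (p + ℓ) ≤ 1 := div_le_one_of_le₀ (by simp) (by positivity)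
  have hinv := abs_inv_total_sub_le (s := s) (ℓ := ℓ) hp hn
  have hpow := abs_one_add_rpow_sub_one_add_mul_le_sq (x := 1 / (n : ℝ)) (by positivity)
    (by positivity) hδ
  calc _ = |(1 / (total p ℓ s n : ℝ) - (p / (p + ℓ)) / n) -
        ((1 + 1 / (n : ℝ)) ^ ((p : ℝ) / (p + ℓ)) - (1 + (p / (p + ℓ)) * (1 / n)))| := by
        congr 1; ring
    _ ≤ (s + ℓ) / n ^ 2 + (1 / n) ^ 2 := (abs_sub _ _).trans (add_le_add hinv hpow)
    _ = (s + ℓ + 1) / n ^ 2 := by ring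

theorem normalizedMean_succ {p ℓ s n : ℕ} (hn : 1 ≤ n) :
    normalizedMean p ℓ s (n + 1) = normalizedMean p ℓ s n *
      ((1 + 1 / (total p ℓ s n : ℝ)) / (1 + 1 / (n : ℝ)) ^ ((p : ℝ) / (p + ℓ))) := by
  have hn' : (0 : ℝ) < n := by exact_mod_cast hn
  have hsucc : ((n + 1 : ℕ) : ℝ) / p = (n / p) * (1 + 1 / n) := by push_cast; field_simp
  rw [normalizedMean, normalizedMean, meanGrowth, prod_range_succ, ← meanGrowth, hsucc,
    Real.mul_rpow (by positivity) (by positivity)]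
  ring

theorem abs_normalizedMean_succ_sub_le {p ℓ s n : ℕ} (hp : 0 < p) (hn : 1 ≤ n) :
    |normalizedMean p ℓ s (n + 1) - normalizedMean p ℓ s n| ≤
      normalizedMean p ℓ s n * ((s + ℓ + 1) / n ^ 2) := by
  set δ : ℝ := p / (p + ℓ)
  have hT : 1 ≤ (1 + 1 / (n : ℝ)) ^ δ :=
    Real.one_le_rpow (le_add_of_nonneg_right (by positivity)) (by positivity)
  have hU : 0 ≤ normalizedMean p ℓ s n := normalizedMean_nonneg p ℓ s n
  rw [normalizedMean_succ hn, ← mul_sub_one, abs_mul, abs_of_nonneg hU]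
  gcongr
  calc |(1 + 1 / (total p ℓ s n : ℝ)) / (1 + 1 / (n : ℝ)) ^ δ - 1|
      = |(1 + 1 / (total p ℓ s n : ℝ)) - (1 + 1 / (n : ℝ)) ^ δ| / (1 + 1 / (n : ℝ)) ^ δ := by
        rw [div_sub_one (zero_lt_one.trans_le hT).ne', abs_div,
          abs_of_pos (zero_lt_one.trans_le hT)]
    _ ≤ |(1 + 1 / (total p ℓ s n : ℝ)) - (1 + 1 / (n : ℝ)) ^ δ| := div_le_self (abs_nonneg _) hT
    _ ≤ (s + ℓ + 1) / n ^ 2 := abs_one_add_inv_total_sub_rpow_le hp hn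

theorem exists_abs_normalizedMean_sub_le {p ℓ s : ℕ} (hp : 0 < p) (hs : 0 < s) :
    ∃ D : ℝ, ∀ n ≥ 1, |normalizedMean p ℓ s n -
      Real.Gamma (s / (p + ℓ)) / Real.Gamma ((s + p) / (p + ℓ))| ≤ D / n := by
  set U := normalizedMean p ℓ s
  set c : ℝ := s + ℓ + 1
  have hc : 0 ≤ c := by positivity
  have hstep : ∀ n ≥ 1, |U (n + 1) - U n| ≤ U n * (c / n ^ 2) := fun n hn =>
    abs_normalizedMean_succ_sub_le hp hn
  have hbound : ∀ n ≥ 1, U n ≤ U 1 * Real.exp (2 * c) :=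
    fun n hn => le_mul_exp_of_le_mul_one_add_div_sq hc (normalizedMean_nonneg p ℓ s)
      (fun n hn => by linarith [(abs_le.1 (hstep n hn)).2]) hn
  refine ⟨2 * (U 1 * Real.exp (2 * c) * c), fun n hn => ?_⟩
  refine abs_sub_le_of_tendsto_comp_of_abs_succ_sub_le (φ := (· * p))
    (tendsto_id.atTop_mul_const' hp) (tendsto_normalizedMean_mul hp hs) (fun n hn => ?_) hn
  calc |U (n + 1) - U n| ≤ U n * (c / n ^ 2) := hstep n hn
    _ ≤ U 1 * Real.exp (2 * c) * (c / n ^ 2) := by gcongr; exact hbound n hn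
    _ = _ := by ring

end YoungPolyaUrn

/-- **Theorem (asymptotics for the mean of Young–Pólya urns).**
With `s₀ = b₀ + w₀` and `δ = p/(p+ℓ)`,
`E[Bₙ] = b₀ (Γ(s₀/(p+ℓ))/Γ((s₀+p)/(p+ℓ))) (n/p)^δ (1 + O(1/n))`. -/
theorem young_polya_urn_mean_asymptotics
    (p ℓ b₀ w₀ : ℕ) (hp : 1 ≤ p) (hb : 1 ≤ b₀) :
    ∃ C : ℝ, ∀ n : ℕ, 1 ≤ n →
      |(∑' b : ℕ, (b : ℝ) * urnMass p ℓ b₀ w₀ n b) -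
          (b₀ : ℝ) *
            (Real.Gamma (((b₀ + w₀ : ℕ) : ℝ) / ((p : ℝ) + (ℓ : ℝ))) /
              Real.Gamma ((((b₀ + w₀ : ℕ) : ℝ) + (p : ℝ)) / ((p : ℝ) + (ℓ : ℝ)))) *
            ((n : ℝ) / (p : ℝ)) ^ ((p : ℝ) / ((p : ℝ) + (ℓ : ℝ)))| ≤
        C * (n : ℝ) ^ ((p : ℝ) / ((p : ℝ) + (ℓ : ℝ)) - 1) := by
  have hs : 0 < b₀ + w₀ := by omega
  obtain ⟨D, hD⟩ := YoungPolyaUrn.exists_abs_normalizedMean_sub_le (ℓ := ℓ) hp hs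
  refine ⟨b₀ * D / (p : ℝ) ^ ((p : ℝ) / (p + ℓ)), fun n hn => ?_⟩
  have hn' : (0 : ℝ) < n := by exact_mod_cast hn
  have hp' : (0 : ℝ) < p := by exact_mod_cast hp
  have hmean : ∑' b : ℕ, (b : ℝ) * urnMass p ℓ b₀ w₀ n b =
      b₀ * YoungPolyaUrn.normalizedMean p ℓ (b₀ + w₀) n * ((n : ℝ) / p) ^ ((p : ℝ) / (p + ℓ)) := by
    rw [YoungPolyaUrn.tsum_mul_urnMass hs, YoungPolyaUrn.normalizedMean, mul_assoc,
      div_mul_cancel₀ _ (by positivity)]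
  rw [hmean, show ∀ U K X : ℝ, b₀ * U * X - b₀ * K * X = b₀ * X * (U - K) from
    fun _ _ _ => by ring, abs_mul, abs_of_pos (by positivity)]
  calc _ ≤ b₀ * ((n : ℝ) / p) ^ ((p : ℝ) / (p + ℓ)) * (D / n) := by gcongr; exact hD n hn
    _ = _ := by
      rw [Real.div_rpow hn'.le hp'.le, Real.rpow_sub_one hn'.ne']
      ring
end

section
/- Let p ≥ 1 and ℓ₁,…,ℓ_p ≥ 0 be integers with ℓ = ℓ₁+⋯+ℓ_p ≥ 1, let b₀ ≥ 1, w₀ ≥ 0 be integers, s₀ = b₀+w₀, and δ = p/(p+ℓ). Let X be a random variable with law GenGammaProd([ℓ₁,…,ℓ_p]; b₀, w₀), so that for every integer r ≥ 1, E[X^r] = (Γ(b₀+r)Γ(s₀)/(Γ(b₀)Γ(s₀+r))) · ∏_{i∈I} Γ((s₀+i+r)/(p+ℓ))/Γ((s₀+i)/(p+ℓ)), where I = {1,…,p+ℓ−1} \ {ℓ₁+⋯+ℓ_j + j : 1 ≤ j ≤ p−1}. Fix β > −δ and let M_r = Γ(β+1)Γ(β/δ + r + 1)/(Γ(β/δ+1)Γ(β+δr+1))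 be the r-th moment of the Mittag-Leffler distribution ML(δ, β). Then (1/r)·log( E[X^r] / ((δ·p^{δ−1})^r · M_r) ) → 0 as r → ∞, i.e. X and δ·p^{δ−1}·Y have similar tails for Y distributed as ML(δ, β). -/
/-!
Weak Stirling: `log Γ(x) = x log x - x + o(x)`, transferred from factorials to real arguments by
the monotonicity of `Γ` on `[2, ∞)`, gives `log Γ(c r + a) = c r (log r + log c - 1) + o(r)` for
`c > 0`. Both moment sequences are products of such Gamma ratios: the `GenGammaProd` moment has
two factors with `c = 1` that cancel to first order and `ℓ` factors with `c = 1/(p+ℓ)` (the index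
set has exactly `ℓ` elements), the Mittag-Leffler moment has one factor with `c = 1` and one with
`c = δ`. The `r log r` terms cancel because `ℓ/(p+ℓ) = 1 - δ`, and with `δ = p/(p+ℓ)` the linear
terms differ exactly by `r log (δ p^(δ-1))`.
-/

open Filter Topology Real

open scoped Classical

/-- For a periodic pattern given by `L : ℕ → ℕ` (so `ℓ_j = L (j-1)` for `j = 1, …, p`),
the set of indices `i ∈ {1, …, p+ℓ-1}` which are *not* of the form
`ℓ₁ + ⋯ + ℓ_j + j` with `1 ≤ j ≤ p-1`, where `ℓ = ℓ₁ + ⋯ + ℓ_p`. -/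
noncomputable def ggIndexSet (L : ℕ → ℕ) (p : ℕ) : Finset ℕ :=
  (Finset.Icc 1 (p + (∑ k ∈ Finset.range p, L k) - 1)).filter
    (fun i => ¬ ∃ j ∈ Finset.Icc 1 (p - 1), i = (∑ k ∈ Finset.range j, L k) + j)

/-- The `r`-th moment of `GenGammaProd([ℓ₁,…,ℓ_p]; b₀, w₀)` (with `s₀ = b₀ + w₀`):
`E[X^r] = (Γ(b₀+r)Γ(s₀)/(Γ(b₀)Γ(s₀+r))) ∏_{i∈I} Γ((s₀+i+r)/(p+ℓ))/Γ((s₀+i)/(p+ℓ))`. -/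
noncomputable def ggProdMoment (L : ℕ → ℕ) (p b₀ w₀ : ℕ) (r : ℕ) : ℝ :=
  Real.Gamma ((b₀ : ℝ) + (r : ℝ)) * Real.Gamma ((b₀ + w₀ : ℕ) : ℝ) /
      (Real.Gamma (b₀ : ℝ) * Real.Gamma (((b₀ + w₀ : ℕ) : ℝ) + (r : ℝ))) *
    ∏ i ∈ ggIndexSet L p,
      Real.Gamma ((((b₀ + w₀ : ℕ) : ℝ) + (i : ℝ) + (r : ℝ)) /
          ((p : ℝ) + ((∑ k ∈ Finset.range p, L k : ℕ) : ℝ))) /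
        Real.Gamma ((((b₀ + w₀ : ℕ) : ℝ) + (i : ℝ)) /
          ((p : ℝ) + ((∑ k ∈ Finset.range p, L k : ℕ) : ℝ)))

/-- The `r`-th moment of the Mittag-Leffler distribution `ML(δ, β)`:
`M_r = Γ(β+1)Γ(β/δ+r+1)/(Γ(β/δ+1)Γ(β+δr+1))`. -/
noncomputable def mittagLefflerMoment (δ β : ℝ) (r : ℕ) : ℝ :=
  Real.Gamma (β + 1) * Real.Gamma (β / δ + (r : ℝ) + 1) /
    (Real.Gamma (β / δ + 1) * Real.Gamma (β + δ * (r : ℝ) + 1))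

open Asymptotics Finset
open scoped Nat

lemma isLittleO_log_comp {α : Type*} {l : Filter α} {u v : α → ℝ} (hu : Tendsto u l atTop)
    (huv : u =O[l] v) : (fun x => log (u x)) =o[l] v :=
  (isLittleO_log_id_atTop.comp_tendsto hu).trans_isBigO huv

-- Tangent-line inequality for the convex function `t ↦ t log t - t`.
lemma mul_log_sub_self_sub_le {a b : ℝ} (ha : 0 < a) (hb : 0 < b) :
    (b * log b - b) - (a * log a - a) ≤ (b - a) * log b := by
  have h := log_le_sub_one_of_pos (div_pos hb ha)
  rw [log_div hb.ne' ha.ne'] at h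
  have key : a * (log b - log a) ≤ b - a :=
    calc a * (log b - log a) ≤ a * (b / a - 1) := mul_le_mul_of_nonneg_left h ha.le
      _ = b - a := by field_simp
  linarith

lemma abs_mul_log_sub_self_sub_le {a b : ℝ} (ha : 0 < a) (hb : 0 < b) :
    |(b * log b - b) - (a * log a - a)| ≤ |b - a| * (|log a| + |log b|) := by
  have hab := mul_log_sub_self_sub_le ha hb
  have hba := mul_log_sub_self_sub_le hb ha
  have h1 : (b - a) * log b ≤ |b - a| * |log b| := by rw [← abs_mul]; exact le_abs_self _
  have h2 : (a - b) * log a ≤ |b - a| * |log a| := by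
    rw [abs_sub_comm, ← abs_mul]; exact le_abs_self _
  have h3 : 0 ≤ |b - a| * |log a| := by positivity
  have h4 : 0 ≤ |b - a| * |log b| := by positivity
  rw [abs_le]
  constructor <;> nlinarith

lemma isLittleO_log_factorial_sub :
    (fun n : ℕ => log (n ! : ℝ) - (n * log n - n)) =o[atTop] (fun n => (n : ℝ)) := by
  have hcast : Tendsto (fun n : ℕ => (n : ℝ)) atTop atTop := tendsto_natCast_atTop_atTop
  have hstirling : (fun n : ℕ => log (Stirling.stirlingSeq n)) =o[atTop] (fun n => (n : ℝ)) :=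
    (((continuousAt_log (by positivity)).tendsto.comp
      Stirling.tendsto_stirlingSeq_sqrt_pi).isBigO_one ℝ).trans_isLittleO
      ((isLittleO_one_left_iff ℝ).2 (tendsto_norm_atTop_atTop.comp hcast))
  have hlog : (fun n : ℕ => log (2 * n)) =o[atTop] (fun n => (n : ℝ)) :=
    isLittleO_log_comp (hcast.const_mul_atTop two_pos) (isBigO_const_mul_self 2 _ _)
  refine (hstirling.add (hlog.const_mul_left (1 / 2))).congr' ?_ EventuallyEq.rfl
  filter_upwards [eventually_ne_atTop 0] with n hn
  rw [Stirling.log_stirlingSeq_formula, log_div (by positivity) (exp_ne_zero 1), log_exp]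
  ring

lemma abs_log_Gamma_sub_log_factorial_floor_le {x : ℝ} (hx : 2 ≤ x) :
    |log (Gamma x) - log (⌊x⌋₊ ! : ℝ)| ≤ log x := by
  set m := ⌊x⌋₊
  have hm : (2 : ℝ) ≤ m := by exact_mod_cast Nat.le_floor (by exact_mod_cast hx)
  have hmx : (m : ℝ) ≤ x := Nat.floor_le (by linarith)
  have hxm : x ≤ m + 1 := (Nat.lt_floor_add_one x).le
  have hΓm : 0 < Gamma m := Gamma_pos_of_pos (by linarith)
  have hmono := Gamma_strictMonoOn_Ici.monotoneOn
  have hupper : Gamma x ≤ m ! := by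
    rw [← Gamma_nat_eq_factorial]
    exact hmono (Set.mem_Ici.2 hx) (Set.mem_Ici.2 (by linarith)) hxm
  have hlower : Gamma m ≤ Gamma x := hmono (Set.mem_Ici.2 hm) (Set.mem_Ici.2 hx) hmx
  have hrec : log (m ! : ℝ) = log m + log (Gamma m) := by
    rw [← Gamma_nat_eq_factorial, Gamma_add_one (by positivity), log_mul (by positivity) hΓm.ne']
  have h1 := log_le_log (by linarith) hmx
  have h2 := log_le_log hΓm hlower
  have h3 := log_le_log (hΓm.trans_le hlower) hupper
  have h4 := log_nonneg (by linarith : (1 : ℝ) ≤ x)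
  rw [abs_le]
  constructor <;> linarith

theorem isLittleO_log_Gamma_sub :
    (fun x : ℝ => log (Gamma x) - (x * log x - x)) =o[atTop] id := by
  set h : ℕ → ℝ := fun n => log (n ! : ℝ) - (n * log n - n)
  have hfloor : (fun x : ℝ => h ⌊x⌋₊) =o[atTop] id := by
    refine (isLittleO_log_factorial_sub.comp_tendsto tendsto_nat_floor_atTop).trans_isBigO ?_
    refine IsBigO.of_bound 1 ?_
    filter_upwards [eventually_ge_atTop 0] with x hx
    simpa [abs_of_nonneg hx] using Nat.floor_le hx
  have hbound : (fun x => (log (Gamma x) - (x * log x - x)) - h ⌊x⌋₊) =O[atTop] log := by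
    refine IsBigO.of_bound 3 ?_
    filter_upwards [eventually_ge_atTop 2] with x hx
    have hm : (2 : ℝ) ≤ ⌊x⌋₊ := by exact_mod_cast Nat.le_floor (by exact_mod_cast hx)
    have hmx : (⌊x⌋₊ : ℝ) ≤ x := Nat.floor_le (by linarith)
    have hxm : x - ⌊x⌋₊ ≤ 1 := by linarith [Nat.lt_floor_add_one x]
    have hΓ := abs_log_Gamma_sub_log_factorial_floor_le hx
    have hφ := abs_mul_log_sub_self_sub_le (by linarith : (0 : ℝ) < ⌊x⌋₊) (by linarith : 0 < x)
    have hlogm := log_le_log (by linarith) hmx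
    have hlogm0 := log_nonneg (by linarith : (1 : ℝ) ≤ ⌊x⌋₊)
    have hlogx0 := log_nonneg (by linarith : (1 : ℝ) ≤ x)
    rw [abs_of_nonneg (by linarith : 0 ≤ x - ⌊x⌋₊), abs_of_nonneg hlogm0,
      abs_of_nonneg hlogx0] at hφ
    rw [norm_eq_abs, norm_eq_abs, abs_of_nonneg hlogx0]
    calc |log (Gamma x) - (x * log x - x) - h ⌊x⌋₊|
        = |(log (Gamma x) - log (⌊x⌋₊ ! : ℝ)) - ((x * log x - x) - (⌊x⌋₊ * log ⌊x⌋₊ - ⌊x⌋₊))| := by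
          simp only [h]; ring_nf
      _ ≤ log x + (x - ⌊x⌋₊) * (log ⌊x⌋₊ + log x) := (abs_sub _ _).trans (add_le_add hΓ hφ)
      _ ≤ 3 * log x := by nlinarith
  simpa using (hbound.trans_isLittleO isLittleO_log_id_atTop).add hfloor

theorem isLittleO_log_Gamma_mul_add {c : ℝ} (hc : 0 < c) (a : ℝ) :
    (fun x : ℝ => log (Gamma (c * x + a)) - c * x * (log x + log c - 1)) =o[atTop] id := by
  have hv : Tendsto (fun x : ℝ => c * x) atTop atTop := tendsto_id.const_mul_atTop hc
  have hu : Tendsto (fun x : ℝ => c * x + a) atTop atTop := tendsto_atTop_add_const_right _ a hv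
  have hvO : (fun x : ℝ => c * x) =O[atTop] id := isBigO_const_mul_self c id _
  have huO : (fun x : ℝ => c * x + a) =O[atTop] id := hvO.add (isLittleO_const_id_atTop a).isBigO
  have hGamma := (isLittleO_log_Gamma_sub.comp_tendsto hu).trans_isBigO huO
  have hlogs : (fun x : ℝ => |log (c * x)| + |log (c * x + a)|) =o[atTop] id :=
    (isLittleO_log_comp hv hvO).abs_left.add (isLittleO_log_comp hu huO).abs_left
  have hshift : (fun x : ℝ => ((c * x + a) * log (c * x + a) - (c * x + a)) -
      (c * x * log (c * x) - c * x)) =O[atTop]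
        (fun x : ℝ => |log (c * x)| + |log (c * x + a)|) := by
    refine IsBigO.of_bound |a| ?_
    filter_upwards [hv.eventually_gt_atTop 0, hu.eventually_gt_atTop 0] with x hx hxa
    rw [norm_eq_abs, norm_eq_abs, abs_of_nonneg (by positivity : 0 ≤ |log (c * x)| + _)]
    simpa using abs_mul_log_sub_self_sub_le hx hxa
  refine (hGamma.add (hshift.trans_isLittleO hlogs)).congr' ?_ EventuallyEq.rfl
  filter_upwards [eventually_gt_atTop 0] with x hx
  simp only [Function.comp, log_mul hc.ne' hx.ne']
  ring

theorem isLittleO_log_Gamma_natCast_mul_add_sub {c : ℝ} (hc : 0 < c) (a : ℝ) :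
    (fun r : ℕ => log (Gamma (c * r + a)) - log (Gamma a) - c * r * (log r + log c - 1))
      =o[atTop] (fun r : ℕ => (r : ℝ)) := by
  have hcast : Tendsto (fun r : ℕ => (r : ℝ)) atTop atTop := tendsto_natCast_atTop_atTop
  refine (((isLittleO_log_Gamma_mul_add hc a).comp_tendsto hcast).sub
    ((isLittleO_const_id_atTop (log (Gamma a))).comp_tendsto hcast)).congr' ?_ EventuallyEq.rfl
  filter_upwards with r
  simp only [Function.comp]
  ring

lemma card_ggIndexSet (L : ℕ → ℕ) {p : ℕ} (hp : 1 ≤ p) :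
    #(ggIndexSet L p) = ∑ k ∈ range p, L k := by
  set f : ℕ → ℕ := fun j => (∑ k ∈ range j, L k) + j
  have hf : StrictMono f := strictMono_nat_of_lt_succ fun j => by
    simp only [f, sum_range_succ]; omega
  have hsub : (Icc 1 (p - 1)).image f ⊆ Icc 1 (p + ∑ k ∈ range p, L k - 1) := by
    simp only [subset_iff, mem_image, mem_Icc]
    rintro _ ⟨j, ⟨hj1, hjp⟩, rfl⟩
    have := sum_le_sum_of_subset (f := L) (range_subset_range.2 (show j ≤ p by omega))
    simp only [f]; omega
  have hsdiff : ggIndexSet L p = Icc 1 (p + ∑ k ∈ range p, L k - 1) \ (Icc 1 (p - 1)).image f := by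
    ext i
    simp [ggIndexSet, f, eq_comm]
  rw [hsdiff, card_sdiff_of_subset hsub, card_image_of_injective _ hf.injective]
  simp only [Nat.card_Icc]
  omega

lemma ggProdMoment_pos (L : ℕ → ℕ) {p : ℕ} (hp : 1 ≤ p) {b₀ : ℕ} (hb : 1 ≤ b₀) (w₀ r : ℕ) :
    0 < ggProdMoment L p b₀ w₀ r := by
  have hN : (0 : ℝ) < p + (∑ k ∈ range p, L k : ℕ) := by positivity
  rw [ggProdMoment]
  positivity

lemma log_ggProdMoment (L : ℕ → ℕ) {p : ℕ} (hp : 1 ≤ p) {b₀ : ℕ} (hb : 1 ≤ b₀) (w₀ r : ℕ) :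
    log (ggProdMoment L p b₀ w₀ r) =
      (log (Gamma (b₀ + r)) - log (Gamma b₀)) -
        (log (Gamma ((b₀ + w₀ : ℕ) + r)) - log (Gamma (b₀ + w₀ : ℕ))) +
      ∑ i ∈ ggIndexSet L p,
        (log (Gamma ((((b₀ + w₀ : ℕ) : ℝ) + i + r) / (p + (∑ k ∈ range p, L k : ℕ)))) -
          log (Gamma ((((b₀ + w₀ : ℕ) : ℝ) + i) / (p + (∑ k ∈ range p, L k : ℕ))))) := by
  have hN : (0 : ℝ) < p + (∑ k ∈ range p, L k : ℕ) := by positivity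
  rw [ggProdMoment, log_mul (by positivity) (prod_pos fun i _ => by positivity).ne',
    log_div (by positivity) (by positivity), log_mul (by positivity) (by positivity),
    log_mul (by positivity) (by positivity),
    log_prod fun i _ => (by positivity : (0 : ℝ) < _ / _).ne']
  rw [sum_congr rfl fun i _ => log_div (by positivity) (by positivity)]
  ring

theorem isLittleO_log_ggProdMoment (L : ℕ → ℕ) {p : ℕ} (hp : 1 ≤ p) {b₀ : ℕ} (hb : 1 ≤ b₀)
    (w₀ : ℕ) :
    (fun r : ℕ => log (ggProdMoment L p b₀ w₀ r) -
      (∑ k ∈ range p, L k : ℕ) / (p + (∑ k ∈ range p, L k : ℕ)) * r *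
        (log r - log (p + (∑ k ∈ range p, L k : ℕ)) - 1)) =o[atTop] (fun r : ℕ => (r : ℝ)) := by
  set ℓ : ℕ := ∑ k ∈ range p, L k
  set N : ℝ := p + ℓ
  set s : ℝ := ((b₀ + w₀ : ℕ) : ℝ)
  have hN : 0 < N := by positivity
  have hsum := IsLittleO.sum (s := ggIndexSet L p) fun i _ =>
    isLittleO_log_Gamma_natCast_mul_add_sub (one_div_pos.2 hN) ((s + i) / N)
  refine (((isLittleO_log_Gamma_natCast_mul_add_sub one_pos b₀).sub
    (isLittleO_log_Gamma_natCast_mul_add_sub one_pos s)).add hsum).congr' ?_ EventuallyEq.rfl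
  filter_upwards with r
  have harg : ∀ i : ℕ, 1 / N * r + (s + i) / N = (s + i + r) / N := fun i => by
    field_simp; ring
  simp only [Finset.sum_apply, harg, one_mul, log_one, log_div one_ne_zero hN.ne']
  rw [log_ggProdMoment L hp hb, sum_sub_distrib, sum_sub_distrib, sum_const, card_ggIndexSet L hp]
  simp only [nsmul_eq_mul, add_comm (r : ℝ)]
  ring

lemma Gamma_mittagLeffler_pos {δ β : ℝ} (hδ : 0 < δ) (hδ1 : δ ≤ 1) (hβ : -δ < β) {x : ℝ}
    (hx : 0 ≤ x) : 0 < Gamma (β + δ * x + 1) ∧ 0 < Gamma (β / δ + x + 1) := by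
  have hβδ : 0 < β / δ + 1 := by rw [div_add_one hδ.ne']; exact div_pos (by linarith) hδ
  exact ⟨Gamma_pos_of_pos (by nlinarith), Gamma_pos_of_pos (by linarith)⟩

lemma mittagLefflerMoment_pos {δ β : ℝ} (hδ : 0 < δ) (hδ1 : δ ≤ 1) (hβ : -δ < β) (r : ℕ) :
    0 < mittagLefflerMoment δ β r := by
  obtain ⟨h₁, h₂⟩ := Gamma_mittagLeffler_pos hδ hδ1 hβ (le_refl 0)
  obtain ⟨h₃, h₄⟩ := Gamma_mittagLeffler_pos hδ hδ1 hβ r.cast_nonneg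
  simp only [mul_zero, add_zero] at h₁ h₂
  rw [mittagLefflerMoment]
  positivity

lemma log_mittagLefflerMoment {δ β : ℝ} (hδ : 0 < δ) (hδ1 : δ ≤ 1) (hβ : -δ < β) (r : ℕ) :
    log (mittagLefflerMoment δ β r) =
      (log (Gamma (β / δ + r + 1)) - log (Gamma (β / δ + 1))) -
        (log (Gamma (β + δ * r + 1)) - log (Gamma (β + 1))) := by
  obtain ⟨h₁, h₂⟩ := Gamma_mittagLeffler_pos hδ hδ1 hβ (le_refl 0)
  obtain ⟨h₃, h₄⟩ := Gamma_mittagLeffler_pos hδ hδ1 hβ r.cast_nonneg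
  simp only [mul_zero, add_zero] at h₁ h₂
  rw [mittagLefflerMoment, log_div (by positivity) (by positivity), log_mul h₁.ne' h₄.ne',
    log_mul h₂.ne' h₃.ne']
  ring

theorem isLittleO_log_mittagLefflerMoment {δ β : ℝ} (hδ : 0 < δ) (hδ1 : δ ≤ 1) (hβ : -δ < β) :
    (fun r : ℕ => log (mittagLefflerMoment δ β r) -
      ((1 - δ) * r * (log r - 1) - δ * log δ * r)) =o[atTop] (fun r : ℕ => (r : ℝ)) := by
  refine ((isLittleO_log_Gamma_natCast_mul_add_sub one_pos (β / δ + 1)).sub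
    (isLittleO_log_Gamma_natCast_mul_add_sub hδ (β + 1))).congr' ?_ EventuallyEq.rfl
  filter_upwards with r
  rw [log_mittagLefflerMoment hδ hδ1 hβ]
  simp only [one_mul, log_one]
  ring_nf

theorem genGammaProd_similar_tails_mittagLeffler_general
    (p : ℕ) (hp : 1 ≤ p) (L : ℕ → ℕ)
    (b₀ w₀ : ℕ) (hb : 1 ≤ b₀) (β : ℝ)
    (hβ : -((p : ℝ) / ((p : ℝ) + ((∑ k ∈ Finset.range p, L k : ℕ) : ℝ))) < β) :
    Tendsto
      (fun r : ℕ =>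
        (1 / (r : ℝ)) *
          Real.log (ggProdMoment L p b₀ w₀ r /
            (((p : ℝ) / ((p : ℝ) + ((∑ k ∈ Finset.range p, L k : ℕ) : ℝ)) *
                  (p : ℝ) ^ ((p : ℝ) / ((p : ℝ) + ((∑ k ∈ Finset.range p, L k : ℕ) : ℝ)) - 1)) ^ r *
              mittagLefflerMoment ((p : ℝ) / ((p : ℝ) + ((∑ k ∈ Finset.range p, L k : ℕ) : ℝ))) β r)))
      atTop (𝓝 0) := by
  set ℓ : ℝ := ((∑ k ∈ range p, L k : ℕ) : ℝ)
  set N : ℝ := p + ℓ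
  set δ : ℝ := p / N
  have hp₀ : (0 : ℝ) < p := by exact_mod_cast hp
  have hN : 0 < N := by positivity
  have hδ : 0 < δ := by positivity
  have hδ1 : δ ≤ 1 := div_le_one_of_le₀ (by simp [N, ℓ]; positivity) hN.le
  have hℓN : ℓ / N = 1 - δ := by
    rw [eq_sub_iff_add_eq, ← add_div, add_comm, div_self hN.ne']
  have hlogδ : log δ = log p - log N := log_div hp₀.ne' hN.ne'
  have hlog_ratio : ∀ r : ℕ,
      log (ggProdMoment L p b₀ w₀ r / ((δ * p ^ (δ - 1)) ^ r * mittagLefflerMoment δ β r)) =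
      (log (ggProdMoment L p b₀ w₀ r) - ℓ / N * r * (log r - log N - 1)) -
        (log (mittagLefflerMoment δ β r) - ((1 - δ) * r * (log r - 1) - δ * log δ * r)) := by
    intro r
    have hE := ggProdMoment_pos L hp hb w₀ r
    have hM := mittagLefflerMoment_pos hδ hδ1 hβ r
    rw [log_div hE.ne' (by positivity), log_mul (by positivity) hM.ne', log_pow,
      log_mul hδ.ne' (by positivity), log_rpow hp₀]
    linear_combination (r : ℝ) * (log r - log N - 1) * hℓN + (r : ℝ) * (δ - 1) * hlogδ
  have hlittleO := ((isLittleO_log_ggProdMoment L hp hb w₀).sub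
    (isLittleO_log_mittagLefflerMoment hδ hδ1 hβ)).congr_left fun r => (hlog_ratio r).symm
  exact hlittleO.tendsto_div_nhds_zero.congr fun r => (one_div_mul_eq_div _ _).symm

/-- **Theorem (similarity with the tail of a Mittag-Leffler distribution).**
Let `X` have law `GenGammaProd([ℓ₁,…,ℓ_p]; b₀, w₀)`, `ℓ = ℓ₁+⋯+ℓ_p ≥ 1`,
`δ = p/(p+ℓ)`, and let `Y` have the Mittag-Leffler distribution `ML(δ, β)` for any
`β > -δ`.  Then `X` and `δ p^{δ-1} Y` have similar tails:
`(1/r) log(E[X^r]/E[(δ p^{δ-1} Y)^r]) → 0` as `r → ∞`. -/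
theorem genGammaProd_similar_tails_mittagLeffler
    (p : ℕ) (hp : 1 ≤ p) (L : ℕ → ℕ) (hl : 1 ≤ ∑ k ∈ Finset.range p, L k)
    (b₀ w₀ : ℕ) (hb : 1 ≤ b₀) (β : ℝ)
    (hβ : -((p : ℝ) / ((p : ℝ) + ((∑ k ∈ Finset.range p, L k : ℕ) : ℝ))) < β) :
    Tendsto
      (fun r : ℕ =>
        (1 / (r : ℝ)) *
          Real.log (ggProdMoment L p b₀ w₀ r /
            (((p : ℝ) / ((p : ℝ) + ((∑ k ∈ Finset.range p, L k : ℕ) : ℝ)) *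
                  (p : ℝ) ^ ((p : ℝ) / ((p : ℝ) + ((∑ k ∈ Finset.range p, L k : ℕ) : ℝ)) - 1)) ^ r *
              mittagLefflerMoment ((p : ℝ) / ((p : ℝ) + ((∑ k ∈ Finset.range p, L k : ℕ) : ℝ))) β r)))
      atTop (𝓝 0) :=
  genGammaProd_similar_tails_mittagLeffler_general p hp L b₀ w₀ hb β hβ
end
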